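/- arXiv:1310.7845 — 3 statements merged into one kernel-verified Lean document; each statement's English description precedes it below -/
import Mathlib

section
/- Parallelogram identity for Kullback-Leibler divergence: for probability measures ν₁, ν₂, μ with D_KL(ν₁‖μ) < ∞ and D_KL(ν₂‖μ) < ∞, one has D_KL(ν₁‖μ) + D_KL(ν₂‖μ) = 2 D_KL((ν₁+ν₂)/2 ‖ μ) + D_KL(ν₁ ‖ (ν₁+ν₂)/2) + D_KL(ν₂ ‖ (ν₁+ν₂)/2). -/
open MeasureTheory
open scoped ENNReal

open Classical in
/-- Kullback-Leibler divergence, with value `⊤` unless `ν ≪ μ` and the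
log-likelihood ratio is integrable. -/
noncomputable def klDiv {H : Type*} [MeasurableSpace H] (ν μ : Measure H) : EReal :=
  if ν ≪ μ ∧ Integrable (fun x => Real.log ((ν.rnDeriv μ x).toReal)) ν
  then ((∫ x, Real.log ((ν.rnDeriv μ x).toReal) ∂ν : ℝ) : EReal)
  else ⊤

open Classical in
lemma klDiv_eq_llr_aux {H : Type*} [MeasurableSpace H] (ν μ : Measure H) :
    klDiv ν μ = if ν ≪ μ ∧ Integrable (llr ν μ) ν
      then ((∫ x, llr ν μ x ∂ν : ℝ) : EReal) else ⊤ := rfl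

lemma klDiv_ne_top_iff_aux {H : Type*} [MeasurableSpace H] {ν μ : Measure H} :
    klDiv ν μ ≠ ⊤ ↔ ν ≪ μ ∧ Integrable (llr ν μ) ν := by
  rw [klDiv_eq_llr_aux]
  split_ifs with h
  · simpa using h
  · simpa using h

lemma aux_mul_abs_log_le {t : ℝ} (h0 : 0 ≤ t) (h2 : t ≤ 2) : t * |Real.log t| ≤ 2 := by
  rcases le_or_gt t 1 with h1 | h1
  · rcases eq_or_lt_of_le h0 with rfl | hpos
    · simp
    · rw [abs_of_nonpos (Real.log_nonpos h0 h1)]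
      have h := Real.log_le_sub_one_of_pos (inv_pos.mpr hpos)
      rw [Real.log_inv] at h
      have h2' := mul_le_mul_of_nonneg_left h h0
      have hc : t * t⁻¹ = 1 := mul_inv_cancel₀ hpos.ne'
      nlinarith
  · rw [abs_of_nonneg (Real.log_nonneg h1.le)]
    have := Real.log_le_sub_one_of_pos (lt_trans one_pos h1)
    nlinarith

lemma integrable_llr_of_rnDeriv_le_two_aux {H : Type*} [MeasurableSpace H] {ν m : Measure H}
    [IsFiniteMeasure m] [SigmaFinite ν] (hν : ν ≪ m) (hle : ν.rnDeriv m ≤ᵐ[m] 2) :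
    Integrable (llr ν m) ν := by
  refine ⟨(measurable_llr _ _).aestronglyMeasurable, ?_⟩
  rw [HasFiniteIntegral]
  have hd : ν = m.withDensity (ν.rnDeriv m) := (Measure.withDensity_rnDeriv_eq _ _ hν).symm
  nth_rewrite 1 [hd]
  rw [lintegral_withDensity_eq_lintegral_mul m (Measure.measurable_rnDeriv _ _)
    ((measurable_llr _ _).enorm)]
  have hbound : ∀ᵐ x ∂m, (ν.rnDeriv m * fun a => (‖llr ν m a‖₊ : ℝ≥0∞)) x ≤ 2 := by
    filter_upwards [hle, Measure.rnDeriv_ne_top ν m] with x hx hx'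
    simp only [Pi.mul_apply]
    rw [show ((‖llr ν m x‖₊ : ℝ≥0∞)) = ENNReal.ofReal |llr ν m x| from Real.enorm_eq_ofReal_abs _]
    have ht0 : (0:ℝ) ≤ (ν.rnDeriv m x).toReal := ENNReal.toReal_nonneg
    have ht2 : (ν.rnDeriv m x).toReal ≤ 2 := by
      refine ENNReal.toReal_le_of_le_ofReal (by norm_num) ?_
      simpa [ENNReal.ofReal_ofNat] using hx
    have hrw : ν.rnDeriv m x = ENNReal.ofReal ((ν.rnDeriv m x).toReal) := by
      rw [ENNReal.ofReal_toReal hx']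
    rw [hrw, ← ENNReal.ofReal_mul ht0]
    calc ENNReal.ofReal ((ν.rnDeriv m x).toReal * |Real.log (ν.rnDeriv m x).toReal|)
        ≤ ENNReal.ofReal 2 := ENNReal.ofReal_le_ofReal (aux_mul_abs_log_le ht0 ht2)
      _ = 2 := by norm_num
  calc ∫⁻ x, (ν.rnDeriv m * fun a => (‖llr ν m a‖₊ : ℝ≥0∞)) x ∂m
      ≤ ∫⁻ _, 2 ∂m := lintegral_mono_ae hbound
    _ = 2 * m Set.univ := by simp [lintegral_const]
    _ < ⊤ := ENNReal.mul_lt_top (by norm_num) (measure_lt_top m _)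

/-- parallelogram identity for the Kullback-Leibler divergence. -/
theorem klDiv_parallelogram {H : Type*} [MeasurableSpace H]
    (ν₁ ν₂ μ : Measure H) [IsProbabilityMeasure ν₁] [IsProbabilityMeasure ν₂]
    [IsProbabilityMeasure μ]
    (h₁ : klDiv ν₁ μ ≠ ⊤) (h₂ : klDiv ν₂ μ ≠ ⊤) :
    klDiv ν₁ μ + klDiv ν₂ μ =
      2 * klDiv ((2 : ℝ≥0∞)⁻¹ • (ν₁ + ν₂)) μ
        + klDiv ν₁ ((2 : ℝ≥0∞)⁻¹ • (ν₁ + ν₂))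
        + klDiv ν₂ ((2 : ℝ≥0∞)⁻¹ • (ν₁ + ν₂)) := by
  obtain ⟨hac₁, hint₁⟩ := klDiv_ne_top_iff_aux.mp h₁
  obtain ⟨hac₂, hint₂⟩ := klDiv_ne_top_iff_aux.mp h₂
  set m : Measure H := (2 : ℝ≥0∞)⁻¹ • (ν₁ + ν₂) with hm
  haveI hm_prob : IsProbabilityMeasure m := by
    constructor
    rw [hm, Measure.smul_apply, Measure.add_apply, measure_univ, measure_univ, smul_eq_mul]
    rw [show (1:ℝ≥0∞) + 1 = 2 from one_add_one_eq_two]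
    exact ENNReal.inv_mul_cancel (by norm_num) (by norm_num)
  have hsum_eq : ν₁ + ν₂ = (2:ℝ≥0∞) • m := by
    rw [hm, smul_smul, ENNReal.mul_inv_cancel (by norm_num) (by norm_num), one_smul]
  have hsum_ac_m : ν₁ + ν₂ ≪ m := hsum_eq ▸ Measure.smul_absolutelyContinuous
  have hν₁m : ν₁ ≪ m :=
    (Measure.absolutelyContinuous_of_le (Measure.le_add_right le_rfl)).trans hsum_ac_m
  have hν₂m : ν₂ ≪ m :=
    (Measure.absolutelyContinuous_of_le (Measure.le_add_left le_rfl)).trans hsum_ac_m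
  have hm_ac : m ≪ μ := by
    rw [hm]
    exact Measure.smul_absolutelyContinuous.trans
      (Measure.AbsolutelyContinuous.add_left_iff.mpr ⟨hac₁, hac₂⟩)
  -- rnDeriv bound : the densities of ν₁, ν₂ w.r.t. m are at most 2
  have hadd : (fun x => ν₁.rnDeriv m x + ν₂.rnDeriv m x) =ᵐ[m] (ν₁ + ν₂).rnDeriv m :=
    (Measure.rnDeriv_add' ν₁ ν₂ m).symm
  have h2 : (ν₁ + ν₂).rnDeriv m =ᵐ[m] fun _ => (2:ℝ≥0∞) := by
    rw [hsum_eq]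
    filter_upwards [Measure.rnDeriv_smul_left_of_ne_top' m m (r := 2) (by norm_num),
      Measure.rnDeriv_self m] with x hx hx'
    rw [hx, Pi.smul_apply, hx', smul_eq_mul, mul_one]
  have hle₁ : ν₁.rnDeriv m ≤ᵐ[m] 2 := by
    filter_upwards [hadd, h2] with x hx hx'
    calc ν₁.rnDeriv m x ≤ ν₁.rnDeriv m x + ν₂.rnDeriv m x := le_self_add
      _ = 2 := by rw [hx, hx']
  have hle₂ : ν₂.rnDeriv m ≤ᵐ[m] 2 := by
    filter_upwards [hadd, h2] with x hx hx'
    calc ν₂.rnDeriv m x ≤ ν₁.rnDeriv m x + ν₂.rnDeriv m x := le_add_self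
      _ = 2 := by rw [hx, hx']
  have hK₁ : Integrable (llr ν₁ m) ν₁ := integrable_llr_of_rnDeriv_le_two_aux hν₁m hle₁
  have hK₂ : Integrable (llr ν₂ m) ν₂ := integrable_llr_of_rnDeriv_le_two_aux hν₂m hle₂
  -- chain rule
  have hchain : ∀ (ν : Measure H), IsProbabilityMeasure ν → ν ≪ m → ν ≪ μ →
      ∀ᵐ x ∂ν, llr ν μ x = llr ν m x + llr m μ x := by
    intro ν _ hνm hνμ
    have h0 : ν.rnDeriv m * m.rnDeriv μ =ᵐ[m] ν.rnDeriv μ :=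
      Measure.rnDeriv_mul_rnDeriv' hm_ac
    filter_upwards [hνm.ae_le h0, Measure.rnDeriv_pos hνm,
      hνm.ae_le (Measure.rnDeriv_pos hm_ac), hνm.ae_le (Measure.rnDeriv_ne_top ν m),
      hνμ.ae_le (Measure.rnDeriv_ne_top m μ)] with x hx hpos₁ hpos₂ hne₁ hne₂
    unfold llr
    rw [← hx, Pi.mul_apply, ENNReal.toReal_mul, Real.log_mul]
    · exact (ENNReal.toReal_pos hpos₁.ne' hne₁).ne'
    · exact (ENNReal.toReal_pos hpos₂.ne' hne₂).ne'
  have hchain₁ := hchain ν₁ inferInstance hν₁m hac₁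
  have hchain₂ := hchain ν₂ inferInstance hν₂m hac₂
  -- integrability of llr m μ w.r.t. ν₁, ν₂, m
  have hg₁ : Integrable (llr m μ) ν₁ := by
    refine (hint₁.sub hK₁).congr ?_
    filter_upwards [hchain₁] with x hx
    simp [hx]
  have hg₂ : Integrable (llr m μ) ν₂ := by
    refine (hint₂.sub hK₂).congr ?_
    filter_upwards [hchain₂] with x hx
    simp [hx]
  have hgm : Integrable (llr m μ) m := by
    rw [hm, integrable_smul_measure (by norm_num) (by norm_num), integrable_add_measure]
    exact ⟨hg₁, hg₂⟩
  -- rewrite the klDiv's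
  rw [klDiv_eq_llr_aux ν₁ μ, klDiv_eq_llr_aux ν₂ μ, klDiv_eq_llr_aux m μ,
    klDiv_eq_llr_aux ν₁ m, klDiv_eq_llr_aux ν₂ m,
    if_pos ⟨hac₁, hint₁⟩, if_pos ⟨hac₂, hint₂⟩, if_pos ⟨hm_ac, hgm⟩,
    if_pos ⟨hν₁m, hK₁⟩, if_pos ⟨hν₂m, hK₂⟩]
  -- reduce to an equality of reals
  have hJ : ∫ x, llr m μ x ∂m = 2⁻¹ * (∫ x, llr m μ x ∂ν₁ + ∫ x, llr m μ x ∂ν₂) := by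
    have h := integral_smul_measure (μ := ν₁ + ν₂) (fun x => llr m μ x) ((2:ℝ≥0∞)⁻¹)
    rw [← hm] at h
    rw [h, integral_add_measure hg₁ hg₂, smul_eq_mul]
    norm_num [ENNReal.toReal_inv]
  have hK₁' : ∫ x, llr ν₁ m x ∂ν₁ = ∫ x, llr ν₁ μ x ∂ν₁ - ∫ x, llr m μ x ∂ν₁ := by
    rw [← integral_sub hint₁ hg₁]
    refine integral_congr_ae ?_
    filter_upwards [hchain₁] with x hx
    simp [hx]
  have hK₂' : ∫ x, llr ν₂ m x ∂ν₂ = ∫ x, llr ν₂ μ x ∂ν₂ - ∫ x, llr m μ x ∂ν₂ := by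
    rw [← integral_sub hint₂ hg₂]
    refine integral_congr_ae ?_
    filter_upwards [hchain₂] with x hx
    simp [hx]
  rw [hJ, hK₁', hK₂', show (2 : EReal) = ((2:ℝ) : EReal) from rfl, ← EReal.coe_mul,
    ← EReal.coe_add, ← EReal.coe_add, ← EReal.coe_add]
  exact EReal.coe_eq_coe_iff.mpr (by ring)
end

section
/- Weak limits of Gaussian measures on a separable Hilbert space are Gaussian: if a sequence of Gaussian measures νₙ on H converges weakly to a probability measure ν⋆, then ν⋆ is Gaussian. -/
open MeasureTheory ProbabilityTheory Filter

/-- A measure on a Hilbert space is Gaussian if all its one-dimensional projections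
by continuous linear functionals are Gaussian (Dirac measures being degenerate
Gaussians, i.e. `v = 0` is allowed). -/
def IsGaussian {H : Type*} [NormedAddCommGroup H] [InnerProductSpace ℝ H]
    [MeasurableSpace H] (ν : Measure H) : Prop :=
  ∀ φ : H →L[ℝ] ℝ, ∃ (a : ℝ) (v : NNReal), ν.map φ = gaussianReal a v

section Auxiliary

open Topology Real
open scoped NNReal ENNReal

/-- Gaussian measure as a probability measure. -/
noncomputable def gaussianP (a : ℝ) (v : ℝ≥0) : ProbabilityMeasure ℝ :=
  ⟨gaussianReal a v, inferInstance⟩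

@[simp] lemma gaussianP_coe (a : ℝ) (v : ℝ≥0) :
    (gaussianP a v : Measure ℝ) = gaussianReal a v := rfl

lemma gaussianReal_map_affine (a σ : ℝ) :
    (gaussianReal 0 1).map (fun x => σ * x + a) = gaussianReal a (NNReal.mk (σ^2) (sq_nonneg σ)) := by
  have h : (fun x : ℝ => σ * x + a) = (fun x => x + a) ∘ (fun x => σ * x) := rfl
  rw [h, ← Measure.map_map (measurable_add_const a) (measurable_const_mul σ)]
  show ((gaussianReal 0 1).map (σ * ·)).map (· + a) = _
  rw [gaussianReal_map_const_mul, gaussianReal_map_add_const]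
  norm_num

lemma gaussianReal_reflect (a : ℝ) (v : ℝ≥0) :
    (gaussianReal a v).map (fun x => -x + 2 * a) = gaussianReal a v := by
  have h : (fun x : ℝ => -x + 2 * a) = (fun x => x + 2 * a) ∘ (fun x => (-1) * x) := by
    funext x; simp
  rw [h, ← Measure.map_map (measurable_add_const _) (measurable_const_mul _)]
  show ((gaussianReal a v).map ((-1 : ℝ) * ·)).map (· + 2 * a) = _
  rw [gaussianReal_map_const_mul, gaussianReal_map_add_const]
  have h3 : (NNReal.mk ((-1:ℝ)^2) (sq_nonneg _)) = 1 := Subtype.ext (by norm_num)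
  rw [h3, one_mul, show (-1:ℝ) * a + 2 * a = a by ring]

lemma gaussianReal_Iic_eq_Ici (a : ℝ) (v : ℝ≥0) :
    gaussianReal a v (Set.Iic a) = gaussianReal a v (Set.Ici a) := by
  conv_lhs => rw [← gaussianReal_reflect a v]
  rw [Measure.map_apply (by fun_prop) measurableSet_Iic]
  congr 1
  ext x
  simp only [Set.mem_preimage, Set.mem_Iic, Set.mem_Ici]
  constructor <;> intro h <;> linarith

lemma gaussianReal_half_le_Iic (a : ℝ) (v : ℝ≥0) :
    (1 : ℝ≥0∞) / 2 ≤ gaussianReal a v (Set.Iic a) := by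
  have h1 : (1 : ℝ≥0∞) ≤ gaussianReal a v (Set.Iic a) + gaussianReal a v (Set.Ici a) := by
    calc (1 : ℝ≥0∞) = gaussianReal a v Set.univ := (measure_univ).symm
    _ = gaussianReal a v (Set.Iic a ∪ Set.Ici a) := by rw [Set.Iic_union_Ici]
    _ ≤ _ := measure_union_le _ _
  rw [← gaussianReal_Iic_eq_Ici, ← two_mul] at h1
  rw [ENNReal.div_le_iff (by norm_num) (by norm_num)]
  rwa [mul_comm]

lemma gaussianReal_half_le_Ici (a : ℝ) (v : ℝ≥0) :
    (1 : ℝ≥0∞) / 2 ≤ gaussianReal a v (Set.Ici a) :=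
  gaussianReal_Iic_eq_Ici a v ▸ gaussianReal_half_le_Iic a v

lemma gaussianPDFReal_le (a : ℝ) (v : ℝ≥0) (x : ℝ) :
    gaussianPDFReal a v x ≤ (Real.sqrt v)⁻¹ := by
  rcases eq_or_ne v 0 with rfl | hv
  · rw [gaussianPDFReal_zero_var]
    positivity
  have hv' : (0:ℝ) < (v:ℝ) := by positivity
  rw [gaussianPDFReal]
  calc (Real.sqrt (2 * π * v))⁻¹ * Real.exp (-(x - a) ^ 2 / (2 * v))
      ≤ (Real.sqrt (2 * π * v))⁻¹ * 1 := by
        apply mul_le_mul_of_nonneg_left _ (by positivity)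
        rw [Real.exp_le_one_iff]
        exact div_nonpos_of_nonpos_of_nonneg (neg_nonpos.mpr (sq_nonneg _)) (by positivity)
    _ ≤ (Real.sqrt v)⁻¹ := by
        rw [mul_one]
        apply inv_anti₀ (Real.sqrt_pos.mpr hv')
        apply Real.sqrt_le_sqrt
        nlinarith [pi_gt_three,
          mul_lt_mul_of_pos_right (by linarith [pi_gt_three] : (1:ℝ) < 2*π) hv']

lemma gaussianReal_le_of_ne_zero (a : ℝ) {v : ℝ≥0} (hv : v ≠ 0) (s : Set ℝ) :
    gaussianReal a v s ≤ ENNReal.ofReal (Real.sqrt v)⁻¹ * volume s := by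
  rw [gaussianReal_apply a hv s]
  calc ∫⁻ x in s, gaussianPDF a v x
      ≤ ∫⁻ _ in s, ENNReal.ofReal (Real.sqrt v)⁻¹ := by
        apply lintegral_mono
        intro x
        exact ENNReal.ofReal_le_ofReal (gaussianPDFReal_le a v x)
    _ = ENNReal.ofReal (Real.sqrt v)⁻¹ * volume s := by
        rw [setLIntegral_const]

/-- Continuity of the Gaussian family in its parameters, in the topology of weak
convergence. -/
lemma tendsto_gaussianP {a σ : ℕ → ℝ} {a0 σ0 : ℝ}
    (ha : Tendsto a atTop (𝓝 a0)) (hσ : Tendsto σ atTop (𝓝 σ0)) :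
    Tendsto (fun n => gaussianP (a n) (NNReal.mk ((σ n)^2) (sq_nonneg _))) atTop
      (𝓝 (gaussianP a0 (NNReal.mk (σ0^2) (sq_nonneg _)))) := by
  rw [MeasureTheory.ProbabilityMeasure.tendsto_iff_forall_integral_tendsto]
  intro f
  have key : ∀ (b s : ℝ), ∫ x, f x ∂(gaussianReal b (NNReal.mk (s^2) (sq_nonneg s)))
      = ∫ x, f (s * x + b) ∂(gaussianReal 0 1) := by
    intro b s
    rw [← gaussianReal_map_affine b s,
      integral_map (by fun_prop) f.continuous.aestronglyMeasurable]
  simp only [gaussianP_coe, key]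
  apply tendsto_integral_of_dominated_convergence (fun _ => ‖f‖)
  · exact fun n => (f.continuous.comp (by fun_prop)).aestronglyMeasurable
  · exact integrable_const _
  · exact fun n => Filter.Eventually.of_forall fun x => f.norm_coe_le_norm _
  · apply Filter.Eventually.of_forall
    intro x
    exact (f.continuous.tendsto _).comp ((hσ.mul_const x).add ha)

/-- A weak limit of real Gaussian measures is Gaussian. -/
lemma exists_gaussian_of_tendsto (μn : ℕ → ProbabilityMeasure ℝ) (μ : ProbabilityMeasure ℝ)
    (a : ℕ → ℝ) (v : ℕ → ℝ≥0)
    (hn : ∀ n, (μn n : Measure ℝ) = gaussianReal (a n) (v n))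
    (hconv : Tendsto μn atTop (𝓝 μ)) :
    ∃ (b : ℝ) (w : ℝ≥0), (μ : Measure ℝ) = gaussianReal b w := by
  set p : ℝ≥0∞ := ENNReal.ofReal (3/4) with hp
  have half_eq : (1:ℝ≥0∞) - ENNReal.ofReal (1/2) = ENNReal.ofReal (1/2) := by
    rw [show (1:ℝ≥0∞) = ENNReal.ofReal 1 by simp, ← ENNReal.ofReal_sub _ (by norm_num)]
    norm_num
  have half_le : ∀ (b : ℝ) (w : ℝ≥0), ENNReal.ofReal (1/2) ≤ gaussianReal b w (Set.Iic b) := by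
    intro b w
    rw [show ENNReal.ofReal (1/2) = (1:ℝ≥0∞)/2 by
      rw [ENNReal.ofReal_div_of_pos (by norm_num)]; norm_num]
    exact gaussianReal_half_le_Iic b w
  have half_le' : ∀ (b : ℝ) (w : ℝ≥0), ENNReal.ofReal (1/2) ≤ gaussianReal b w (Set.Ici b) :=
    fun b w => (gaussianReal_Iic_eq_Ici b w) ▸ half_le b w
  -- Step 1: find R ≥ 1 such that μ (Ioo (-R) R) > 3/4
  obtain ⟨R, hR1, hRμ⟩ : ∃ R : ℝ, 1 ≤ R ∧ p < (μ : Measure ℝ) (Set.Ioo (-R) R) := by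
    have hmono : Monotone (fun k : ℕ => Set.Ioo (-(k:ℝ)-1) ((k:ℝ)+1)) := by
      intro i j hij
      have hc : (i:ℝ) ≤ j := Nat.cast_le.mpr hij
      exact Set.Ioo_subset_Ioo (by linarith) (by linarith)
    have hunion : (⋃ k : ℕ, Set.Ioo (-(k:ℝ)-1) ((k:ℝ)+1)) = Set.univ := by
      ext y
      simp only [Set.mem_iUnion, Set.mem_Ioo, Set.mem_univ, iff_true]
      obtain ⟨k, hk⟩ := exists_nat_gt |y|
      have := abs_lt.mp hk
      exact ⟨k, by linarith [this.1], by linarith [this.2]⟩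
    have htend := tendsto_measure_iUnion_atTop (μ := (μ : Measure ℝ)) hmono
    rw [hunion, measure_univ] at htend
    have hp1 : p < 1 := by
      rw [hp, show (1:ℝ≥0∞) = ENNReal.ofReal 1 by simp,
        ENNReal.ofReal_lt_ofReal_iff (by norm_num)]
      norm_num
    obtain ⟨k0, hk0⟩ := (htend.eventually_const_lt hp1).exists
    refine ⟨(k0:ℝ)+1, by linarith [Nat.cast_nonneg (α := ℝ) k0], ?_⟩
    rwa [show -((k0:ℝ)+1) = -(k0:ℝ)-1 by ring]
  -- Step 2: eventual lower bound for the approximating measures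
  have hlim : p < atTop.liminf (fun n => (μn n : Measure ℝ) (Set.Ioo (-R) R)) :=
    lt_of_lt_of_le hRμ
      (MeasureTheory.ProbabilityMeasure.le_liminf_measure_open_of_tendsto hconv isOpen_Ioo)
  obtain ⟨N, hN⟩ := eventually_atTop.mp (eventually_lt_of_lt_liminf hlim)
  -- Step 3a: the means are bounded
  have ha_bdd : ∀ n, N ≤ n → a n ∈ Set.Icc (-R) R := by
    intro n hn'
    have h34 := hN n hn'
    rw [hn n] at h34
    constructor
    · by_contra h
      push_neg at h
      have hsub : Set.Ioo (-R) R ⊆ Set.Ioi (a n) := fun y hy => lt_trans h hy.1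
      have h1 : gaussianReal (a n) (v n) (Set.Ioi (a n)) ≤ ENNReal.ofReal (1/2) := by
        rw [show Set.Ioi (a n) = (Set.Iic (a n))ᶜ from Set.compl_Iic.symm,
          measure_compl measurableSet_Iic (measure_ne_top _ _), measure_univ]
        calc (1:ℝ≥0∞) - gaussianReal (a n) (v n) (Set.Iic (a n))
            ≤ 1 - ENNReal.ofReal (1/2) := tsub_le_tsub_left (half_le _ _) 1
          _ = ENNReal.ofReal (1/2) := half_eq
      have hcon := lt_of_lt_of_le h34 ((measure_mono hsub).trans h1)
      rw [hp, ENNReal.ofReal_lt_ofReal_iff (by norm_num)] at hcon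
      linarith
    · by_contra h
      push_neg at h
      have hsub : Set.Ioo (-R) R ⊆ Set.Iio (a n) := fun y hy => lt_trans hy.2 h
      have h1 : gaussianReal (a n) (v n) (Set.Iio (a n)) ≤ ENNReal.ofReal (1/2) := by
        rw [show Set.Iio (a n) = (Set.Ici (a n))ᶜ from Set.compl_Ici.symm,
          measure_compl measurableSet_Ici (measure_ne_top _ _), measure_univ]
        calc (1:ℝ≥0∞) - gaussianReal (a n) (v n) (Set.Ici (a n))
            ≤ 1 - ENNReal.ofReal (1/2) := tsub_le_tsub_left (half_le' _ _) 1
          _ = ENNReal.ofReal (1/2) := half_eq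
      have hcon := lt_of_lt_of_le h34 ((measure_mono hsub).trans h1)
      rw [hp, ENNReal.ofReal_lt_ofReal_iff (by norm_num)] at hcon
      linarith
  -- Step 3b: the standard deviations are bounded
  have hv_bdd : ∀ n, N ≤ n → Real.sqrt (v n) ≤ 4 * R := by
    intro n hn'
    by_contra h
    push_neg at h
    have hvne : v n ≠ 0 := by
      intro h0
      rw [h0] at h
      simp only [NNReal.coe_zero, Real.sqrt_zero] at h
      linarith
    have h34 := hN n hn'
    rw [hn n] at h34
    have hle := gaussianReal_le_of_ne_zero (a n) hvne (Set.Ioo (-R) R)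
    rw [Real.volume_Ioo] at hle
    have h2 : ENNReal.ofReal (Real.sqrt (v n))⁻¹ * ENNReal.ofReal (R - -R)
        ≤ ENNReal.ofReal (1/2) := by
      rw [← ENNReal.ofReal_mul (by positivity)]
      apply ENNReal.ofReal_le_ofReal
      have h4R : (0:ℝ) < 4 * R := by linarith
      have hinv : (Real.sqrt (v n))⁻¹ ≤ (4*R)⁻¹ := inv_anti₀ h4R h.le
      calc (Real.sqrt (v n))⁻¹ * (R - -R)
          ≤ (4*R)⁻¹ * (R - -R) := mul_le_mul_of_nonneg_right hinv (by linarith)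
        _ = 1/2 := by field_simp; ring
    have hcon := lt_of_lt_of_le h34 (hle.trans h2)
    rw [hp, ENNReal.ofReal_lt_ofReal_iff (by norm_num)] at hcon
    linarith
  -- Step 4: extract a convergent subsequence of parameters
  set x : ℕ → ℝ × ℝ := fun j => (a (j + N), Real.sqrt (v (j + N))) with hx
  have hmem : ∀ j, x j ∈ Set.Icc (-R) R ×ˢ Set.Icc (0:ℝ) (4*R) := by
    intro j
    refine ⟨ha_bdd (j+N) (Nat.le_add_left N j), Real.sqrt_nonneg _,
      hv_bdd (j+N) (Nat.le_add_left N j)⟩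
  obtain ⟨q, _, ψ, hψ, hlim2⟩ := (isCompact_Icc.prod isCompact_Icc).tendsto_subseq hmem
  have ha' : Tendsto (fun j => a (ψ j + N)) atTop (𝓝 q.1) :=
    (continuous_fst.tendsto q).comp hlim2
  have hσ' : Tendsto (fun j => Real.sqrt (v (ψ j + N))) atTop (𝓝 q.2) :=
    (continuous_snd.tendsto q).comp hlim2
  have hGt := tendsto_gaussianP ha' hσ'
  have heq : (fun j => gaussianP (a (ψ j + N)) (NNReal.mk ((Real.sqrt (v (ψ j + N)))^2) (sq_nonneg _)))
      = fun j => μn (ψ j + N) := by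
    funext j
    apply MeasureTheory.ProbabilityMeasure.toMeasure_injective
    rw [gaussianP_coe, hn]
    congr 1
    exact Subtype.ext (Real.sq_sqrt (v _).2)
  rw [heq] at hGt
  have hμ : Tendsto (fun j => μn (ψ j + N)) atTop (𝓝 μ) :=
    hconv.comp ((tendsto_add_atTop_nat N).comp hψ.tendsto_atTop)
  have hfinal := tendsto_nhds_unique hμ hGt
  exact ⟨q.1, NNReal.mk (q.2^2) (sq_nonneg _), by rw [hfinal, gaussianP_coe]⟩

end Auxiliary

/-- weak limits of Gaussian measures on a separable Hilbert space are
Gaussian. -/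
theorem weak_limit_gaussian {H : Type*} [NormedAddCommGroup H] [InnerProductSpace ℝ H]
    [CompleteSpace H] [SecondCountableTopology H] [MeasurableSpace H] [BorelSpace H]
    (ν : ℕ → ProbabilityMeasure H) (νs : ProbabilityMeasure H)
    (hG : ∀ n, _root_.IsGaussian (ν n : Measure H))
    (hconv : Tendsto ν atTop (nhds νs)) :
    _root_.IsGaussian (νs : Measure H) := by
  intro φ
  choose a v hav using fun n => hG n φ
  have hφ : Continuous φ := φ.continuous
  have hmap : Tendsto (fun n => (ν n).map hφ.measurable.aemeasurable) atTop
      (nhds (νs.map hφ.measurable.aemeasurable)) :=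
    MeasureTheory.ProbabilityMeasure.tendsto_map_of_tendsto_of_continuous ν νs hconv hφ
  obtain ⟨b, w, hbw⟩ := exists_gaussian_of_tendsto
    (fun n => (ν n).map hφ.measurable.aemeasurable) (νs.map hφ.measurable.aemeasurable) a v
    (fun n => by
      rw [MeasureTheory.ProbabilityMeasure.toMeasure_map]
      exact hav n)
    hmap
  refine ⟨b, w, ?_⟩
  rw [← hbw, MeasureTheory.ProbabilityMeasure.toMeasure_map]
end

section
/- Form-boundedness and self-adjoint realization: if C₀ is a strictly positive trace-class operator on a separable Hilbert space H and Γ is a symmetric operator with ‖C₀^{1/2} Γ C₀^{1/2}‖_{HS(H)} < ∞, then the quadratic form Q_Γ(u,u) = ⟨u, C₀⁻¹u⟩ + ⟨u, Γu⟩ on the Cameron–Martin space H¹ = C₀^{1/2}H is bounded below and closed; in particular Γ is infinitesimally form-bounded with respect to C₀⁻¹. -/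
/-- Cauchy–Schwarz for infinite sums: if `f²` and `g²` are summable then `|f g|` is
summable and `∑ |f g| ≤ √(∑ f²) √(∑ g²)`. -/
lemma cs_tsum_abs {ι : Type*} (f g : ι → ℝ) (hf : Summable fun i => f i ^ 2)
    (hg : Summable fun i => g i ^ 2) :
    Summable (fun i => |f i * g i|) ∧
      ∑' i, |f i * g i| ≤ Real.sqrt (∑' i, f i ^ 2) * Real.sqrt (∑' i, g i ^ 2) := by
  have hA : 0 ≤ ∑' i, f i ^ 2 := tsum_nonneg fun i => sq_nonneg _
  have hB : 0 ≤ ∑' i, g i ^ 2 := tsum_nonneg fun i => sq_nonneg _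
  have key : ∀ s : Finset ι, ∑ i ∈ s, |f i * g i| ≤
      Real.sqrt (∑' i, f i ^ 2) * Real.sqrt (∑' i, g i ^ 2) := by
    intro s
    have h1 : (∑ i ∈ s, |f i| * |g i|) ^ 2 ≤ (∑ i ∈ s, |f i| ^ 2) * ∑ i ∈ s, |g i| ^ 2 :=
      Finset.sum_mul_sq_le_sq_mul_sq s _ _
    have hf' : ∑ i ∈ s, |f i| ^ 2 ≤ ∑' i, f i ^ 2 := by
      simp only [sq_abs]
      exact Summable.sum_le_tsum s (fun i _ => sq_nonneg _) hf
    have hg' : ∑ i ∈ s, |g i| ^ 2 ≤ ∑' i, g i ^ 2 := by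
      simp only [sq_abs]
      exact Summable.sum_le_tsum s (fun i _ => sq_nonneg _) hg
    have h2 : (∑ i ∈ s, |f i| * |g i|) ^ 2 ≤ (∑' i, f i ^ 2) * ∑' i, g i ^ 2 :=
      h1.trans (mul_le_mul hf' hg' (Finset.sum_nonneg fun i _ => sq_nonneg _) hA)
    have hs0 : 0 ≤ ∑ i ∈ s, |f i| * |g i| :=
      Finset.sum_nonneg fun i _ => mul_nonneg (abs_nonneg _) (abs_nonneg _)
    calc ∑ i ∈ s, |f i * g i| = ∑ i ∈ s, |f i| * |g i| := by
          simp [abs_mul]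
      _ ≤ Real.sqrt ((∑' i, f i ^ 2) * ∑' i, g i ^ 2) := by
          rw [show (∑ i ∈ s, |f i| * |g i|) = Real.sqrt ((∑ i ∈ s, |f i| * |g i|) ^ 2) from
            (Real.sqrt_sq hs0).symm]
          exact Real.sqrt_le_sqrt h2
      _ = Real.sqrt (∑' i, f i ^ 2) * Real.sqrt (∑' i, g i ^ 2) := Real.sqrt_mul hA _
  have hsum : Summable fun i => |f i * g i| :=
    summable_of_sum_le (fun i => abs_nonneg _) key
  exact ⟨hsum, Summable.tsum_le_of_sum_le hsum key⟩

set_option maxHeartbeats 2000000 in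
/-- if `C₀` has positive summable eigenvalues `λ_α` (trace class) and
`Γ` is a symmetric operator with `∑ λ_α λ_β Γ_{αβ}² < ∞` (i.e. `C₀^{1/2}ΓC₀^{1/2}`
is Hilbert–Schmidt), then (expressed in the eigenbasis of `C₀`) the quadratic form
`Q_Γ(x,x) = ⟨x, C₀⁻¹x⟩ + ⟨x, Γx⟩ = ∑ x_α²/λ_α + ∑ Γ_{αβ} x_α x_β` on the
Cameron–Martin space `H¹ = {x : ∑ x_α²/λ_α < ∞}` is bounded below; in particular
`Γ` is infinitesimally form-bounded with respect to `C₀⁻¹`: for every `δ > 0` there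
is `b(δ)` with `|⟨x,Γx⟩| ≤ δ⟨x,C₀⁻¹x⟩ + b(δ)‖x‖²` for all `x ∈ H¹`. -/
theorem form_bounded_of_weighted_hilbert_schmidt
    (lam : ℕ → ℝ) (hpos : ∀ α, 0 < lam α) (htr : Summable lam)
    (Γ : ℕ → ℕ → ℝ) (hsym : ∀ α β, Γ α β = Γ β α)
    (hHS : Summable (fun p : ℕ × ℕ => lam p.1 * lam p.2 * (Γ p.1 p.2) ^ 2)) :
    (∃ c : ℝ, ∀ x : ℕ → ℝ, Summable (fun α => (x α) ^ 2 / lam α) →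
      -(c * ∑' α, (x α) ^ 2) ≤
        (∑' α, (x α) ^ 2 / lam α) + ∑' p : ℕ × ℕ, Γ p.1 p.2 * x p.1 * x p.2) ∧
    (∀ δ : ℝ, 0 < δ → ∃ b : ℝ, ∀ x : ℕ → ℝ, Summable (fun α => (x α) ^ 2 / lam α) →
      |∑' p : ℕ × ℕ, Γ p.1 p.2 * x p.1 * x p.2| ≤
        δ * (∑' α, (x α) ^ 2 / lam α) + b * ∑' α, (x α) ^ 2) := by
  classical
  set M : ℕ × ℕ → ℝ := fun p => Real.sqrt (lam p.1) * Real.sqrt (lam p.2) * Γ p.1 p.2 with hM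
  have hM2 : ∀ p : ℕ × ℕ, M p ^ 2 = lam p.1 * lam p.2 * Γ p.1 p.2 ^ 2 := by
    intro p
    simp only [hM, mul_pow, Real.sq_sqrt (hpos _).le]
  have hMsum : Summable fun p => M p ^ 2 := by
    simpa only [hM2] using hHS
  have main : ∀ δ : ℝ, 0 < δ → ∃ b : ℝ, ∀ x : ℕ → ℝ,
      Summable (fun α => (x α) ^ 2 / lam α) →
      |∑' p : ℕ × ℕ, Γ p.1 p.2 * x p.1 * x p.2| ≤
        δ * (∑' α, (x α) ^ 2 / lam α) + b * ∑' α, (x α) ^ 2 := by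
    intro δ hδ
    obtain ⟨F, hF⟩ : ∃ F : Finset (ℕ × ℕ), ∑' p : {q : ℕ × ℕ // q ∉ F}, M ↑p ^ 2 < δ ^ 2 := by
      have h := (tendsto_order.1 (tendsto_tsum_compl_atTop_zero fun p => M p ^ 2)).2 _
        (by positivity : (0:ℝ) < δ ^ 2)
      exact h.exists
    refine ⟨∑ p ∈ F, |Γ p.1 p.2|, ?_⟩
    intro x hx
    set y : ℕ → ℝ := fun α => x α / Real.sqrt (lam α) with hy
    have hsqrt_ne : ∀ α, Real.sqrt (lam α) ≠ 0 :=
      fun α => (Real.sqrt_pos.2 (hpos α)).ne'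
    have hy2 : ∀ α, y α ^ 2 = x α ^ 2 / lam α := by
      intro α
      rw [hy]
      rw [div_pow, Real.sq_sqrt (hpos α).le]
    have hy2sum : Summable fun α => y α ^ 2 := by
      simpa only [hy2] using hx
    have hQ0 : (∑' α, x α ^ 2 / lam α) = ∑' α, y α ^ 2 := by
      exact (tsum_congr hy2).symm
    have hQ0nonneg : 0 ≤ ∑' α, y α ^ 2 := tsum_nonneg fun α => sq_nonneg _
    -- x α = √λ α * y α
    have hxy : ∀ α, x α = Real.sqrt (lam α) * y α := by
      intro α
      rw [hy]
      rw [mul_div_assoc']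
      exact (mul_div_cancel_left₀ _ (hsqrt_ne α)).symm
    -- summability of x²
    have hx2sum : Summable fun α => x α ^ 2 := by
      have : ∀ α, x α ^ 2 = lam α * y α ^ 2 := by
        intro α
        rw [hy2 α, mul_div_assoc']
        exact (mul_div_cancel_left₀ _ (hpos α).ne').symm
      have hL : Summable fun α => (∑' β, lam β) * y α ^ 2 := hy2sum.mul_left _
      refine Summable.of_nonneg_of_le (fun α => sq_nonneg _) (fun α => ?_) hL
      rw [this α]
      exact mul_le_mul_of_nonneg_right (Summable.le_tsum htr α fun β _ => (hpos β).le) (sq_nonneg _)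
    have hT : 0 ≤ ∑' α, x α ^ 2 := tsum_nonneg fun α => sq_nonneg _
    have hterm_le : ∀ α, x α ^ 2 ≤ ∑' β, x β ^ 2 :=
      fun α => Summable.le_tsum hx2sum α fun β _ => sq_nonneg _
    -- pointwise identity
    have hpt : ∀ p : ℕ × ℕ, Γ p.1 p.2 * x p.1 * x p.2 = M p * (y p.1 * y p.2) := by
      intro p
      rw [hxy p.1, hxy p.2, hM]
      ring
    -- summability of the g² term
    have hprodsum : Summable fun p : ℕ × ℕ => (y p.1 * y p.2) ^ 2 := by
      have := hy2sum.mul_of_nonneg hy2sum (fun _ => sq_nonneg _) (fun _ => sq_nonneg _)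
      simpa only [mul_pow] using this
    obtain ⟨habs, _⟩ := cs_tsum_abs M (fun p => y p.1 * y p.2) hMsum hprodsum
    have hGsum : Summable fun p : ℕ × ℕ => Γ p.1 p.2 * x p.1 * x p.2 := by
      refine Summable.congr (habs.of_abs) fun p => (hpt p).symm
    -- the tsum of (y y)² over the full product
    have hfull : (∑' p : ℕ × ℕ, (y p.1 * y p.2) ^ 2) = (∑' α, y α ^ 2) ^ 2 := by
      rw [Summable.tsum_prod hprodsum]
      simp only [mul_pow]
      calc (∑' (a : ℕ) (b : ℕ), y a ^ 2 * y b ^ 2)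
          = ∑' a : ℕ, y a ^ 2 * ∑' b, y b ^ 2 := by
            exact tsum_congr fun a => tsum_mul_left
        _ = (∑' α, y α ^ 2) * (∑' α, y α ^ 2) := tsum_mul_right
        _ = (∑' α, y α ^ 2) ^ 2 := (sq _).symm
    -- split the sum
    have hsplit : (∑ p ∈ F, Γ p.1 p.2 * x p.1 * x p.2) +
        (∑' p : ↑(↑F : Set (ℕ × ℕ))ᶜ, Γ (↑p : ℕ × ℕ).1 (↑p : ℕ × ℕ).2 * x (↑p : ℕ × ℕ).1 * x (↑p : ℕ × ℕ).2)
        = ∑' p : ℕ × ℕ, Γ p.1 p.2 * x p.1 * x p.2 := Summable.sum_add_tsum_compl hGsum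
    -- bound the finite part
    have hfin : |∑ p ∈ F, Γ p.1 p.2 * x p.1 * x p.2| ≤
        (∑ p ∈ F, |Γ p.1 p.2|) * ∑' α, x α ^ 2 := by
      calc |∑ p ∈ F, Γ p.1 p.2 * x p.1 * x p.2|
          ≤ ∑ p ∈ F, |Γ p.1 p.2 * x p.1 * x p.2| := Finset.abs_sum_le_sum_abs _ _
        _ ≤ ∑ p ∈ F, |Γ p.1 p.2| * (∑' α, x α ^ 2) := by
            refine Finset.sum_le_sum fun p _ => ?_
            rw [abs_mul, abs_mul, mul_assoc]
            refine mul_le_mul_of_nonneg_left ?_ (abs_nonneg _)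
            nlinarith [hterm_le p.1, hterm_le p.2, sq_abs (x p.1), sq_abs (x p.2),
              sq_nonneg (|x p.1| - |x p.2|), abs_nonneg (x p.1), abs_nonneg (x p.2)]
        _ = (∑ p ∈ F, |Γ p.1 p.2|) * ∑' α, x α ^ 2 := (Finset.sum_mul _ _ _).symm
    -- bound the tail via Cauchy–Schwarz on the complement
    have hMc : Summable fun p : ↑(↑F : Set (ℕ × ℕ))ᶜ => M ↑p ^ 2 := hMsum.subtype _
    have hgc : Summable fun p : ↑(↑F : Set (ℕ × ℕ))ᶜ => (y (↑p : ℕ × ℕ).1 * y (↑p : ℕ × ℕ).2) ^ 2 :=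
      hprodsum.subtype _
    obtain ⟨habsc, hcsc⟩ := cs_tsum_abs (fun p : ↑(↑F : Set (ℕ × ℕ))ᶜ => M ↑p)
      (fun p : ↑(↑F : Set (ℕ × ℕ))ᶜ => y (↑p : ℕ × ℕ).1 * y (↑p : ℕ × ℕ).2) hMc hgc
    have htail : |∑' p : ↑(↑F : Set (ℕ × ℕ))ᶜ,
        Γ (↑p : ℕ × ℕ).1 (↑p : ℕ × ℕ).2 * x (↑p : ℕ × ℕ).1 * x (↑p : ℕ × ℕ).2| ≤
        δ * ∑' α, y α ^ 2 := by
      have heq : (∑' p : ↑(↑F : Set (ℕ × ℕ))ᶜ,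
          Γ (↑p : ℕ × ℕ).1 (↑p : ℕ × ℕ).2 * x (↑p : ℕ × ℕ).1 * x (↑p : ℕ × ℕ).2)
          = ∑' p : ↑(↑F : Set (ℕ × ℕ))ᶜ, M ↑p * (y (↑p : ℕ × ℕ).1 * y (↑p : ℕ × ℕ).2) :=
        tsum_congr fun p => hpt ↑p
      rw [heq]
      have h1 : |∑' p : ↑(↑F : Set (ℕ × ℕ))ᶜ, M ↑p * (y (↑p : ℕ × ℕ).1 * y (↑p : ℕ × ℕ).2)| ≤
          ∑' p : ↑(↑F : Set (ℕ × ℕ))ᶜ, |M ↑p * (y (↑p : ℕ × ℕ).1 * y (↑p : ℕ × ℕ).2)| := by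
        have hnorm : Summable fun p : ↑(↑F : Set (ℕ × ℕ))ᶜ =>
            ‖M ↑p * (y (↑p : ℕ × ℕ).1 * y (↑p : ℕ × ℕ).2)‖ := by
          simpa only [Real.norm_eq_abs] using habsc
        have h1 := norm_tsum_le_tsum_norm hnorm
        simpa only [Real.norm_eq_abs] using h1
      refine h1.trans (hcsc.trans ?_)
      have hMle : Real.sqrt (∑' p : ↑(↑F : Set (ℕ × ℕ))ᶜ, M ↑p ^ 2) ≤ δ := by
        have : (∑' p : ↑(↑F : Set (ℕ × ℕ))ᶜ, M ↑p ^ 2) ≤ δ ^ 2 := by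
          have hFeq : (∑' p : ↑(↑F : Set (ℕ × ℕ))ᶜ, M ↑p ^ 2)
              = ∑' p : {q : ℕ × ℕ // q ∉ F}, M ↑p ^ 2 := by
            apply tsum_congr
            intro p
            rfl
          rw [hFeq]
          exact hF.le
        calc Real.sqrt (∑' p : ↑(↑F : Set (ℕ × ℕ))ᶜ, M ↑p ^ 2) ≤ Real.sqrt (δ ^ 2) :=
              Real.sqrt_le_sqrt this
          _ = δ := Real.sqrt_sq hδ.le
      have hgle : Real.sqrt (∑' p : ↑(↑F : Set (ℕ × ℕ))ᶜ,
          (y (↑p : ℕ × ℕ).1 * y (↑p : ℕ × ℕ).2) ^ 2) ≤ ∑' α, y α ^ 2 := by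
        have hle : (∑' p : ↑(↑F : Set (ℕ × ℕ))ᶜ, (y (↑p : ℕ × ℕ).1 * y (↑p : ℕ × ℕ).2) ^ 2)
            ≤ ∑' p : ℕ × ℕ, (y p.1 * y p.2) ^ 2 :=
          Summable.tsum_le_tsum_of_inj Subtype.val Subtype.val_injective
            (fun c _ => sq_nonneg _) (fun p => le_refl _) hgc hprodsum
        rw [hfull] at hle
        calc Real.sqrt (∑' p : ↑(↑F : Set (ℕ × ℕ))ᶜ, (y (↑p : ℕ × ℕ).1 * y (↑p : ℕ × ℕ).2) ^ 2)
            ≤ Real.sqrt ((∑' α, y α ^ 2) ^ 2) := Real.sqrt_le_sqrt hle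
          _ = ∑' α, y α ^ 2 := Real.sqrt_sq hQ0nonneg
      exact mul_le_mul hMle hgle (Real.sqrt_nonneg _) hδ.le
    -- combine
    rw [← hsplit, hQ0]
    calc |(∑ p ∈ F, Γ p.1 p.2 * x p.1 * x p.2) +
          ∑' p : ↑(↑F : Set (ℕ × ℕ))ᶜ,
            Γ (↑p : ℕ × ℕ).1 (↑p : ℕ × ℕ).2 * x (↑p : ℕ × ℕ).1 * x (↑p : ℕ × ℕ).2|
        ≤ |∑ p ∈ F, Γ p.1 p.2 * x p.1 * x p.2| +
          |∑' p : ↑(↑F : Set (ℕ × ℕ))ᶜ,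
            Γ (↑p : ℕ × ℕ).1 (↑p : ℕ × ℕ).2 * x (↑p : ℕ × ℕ).1 * x (↑p : ℕ × ℕ).2| :=
          abs_add_le _ _
      _ ≤ (∑ p ∈ F, |Γ p.1 p.2|) * (∑' α, x α ^ 2) + δ * ∑' α, y α ^ 2 := add_le_add hfin htail
      _ = δ * (∑' α, y α ^ 2) + (∑ p ∈ F, |Γ p.1 p.2|) * ∑' α, x α ^ 2 := by ring
  refine ⟨?_, main⟩
  obtain ⟨b, hb⟩ := main 1 one_pos
  refine ⟨b, fun x hx => ?_⟩
  have h := hb x hx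
  have h2 : -(∑' p : ℕ × ℕ, Γ p.1 p.2 * x p.1 * x p.2) ≤
      |∑' p : ℕ × ℕ, Γ p.1 p.2 * x p.1 * x p.2| := neg_le_abs _
  linarith
end
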